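/- arXiv:1706.10191 — 5 statements merged into one kernel-verified Lean document; each statement's English description precedes it below -/
import Mathlib

section
/- In the POP formulation, suppose y,z satisfy the range constraints z(v,1)=0, y(H,v)=0, the transitivity constraints y(i,v) ≥ y(i+1,v), the complementarity constraints y(i,v)+z(v,i+1)=1, and additionally for every edge (u,v) and color i: y(i,u)+z(u,i)+y(i,v)+z(v,i) ≥ 1. Then the map c sending each vertex v to the unique color i with y(i,v)=z(v,i)=0 is a proper coloring of G. -/
open Finset

theorem pop_gives_proper_coloring_general
    {V : Type*} (G : SimpleGraph V) (H : ℕ)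
    (y : ℕ → V → ℕ) (z : V → ℕ → ℕ)
    (hedge : ∀ u v : V, G.Adj u v → ∀ i ∈ Icc 1 H,
      1 ≤ y i u + z u i + y i v + z v i)
    (c : V → ℕ)
    (hc : ∀ v : V, c v ∈ Icc 1 H ∧ y (c v) v = 0 ∧ z v (c v) = 0) :
    ∀ u v : V, G.Adj u v → c u ≠ c v := by
  intro u v hadj hcuv
  obtain ⟨hmem, hyu, hzu⟩ := hc u
  obtain ⟨-, hyv, hzv⟩ := hc v
  have hcover := hedge u v hadj (c u) hmem
  rw [hyu, hzu, hcuv, hyv, hzv] at hcover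
  omega

/-- In the POP formulation, any feasible solution yields a proper coloring:
the map sending each vertex `v` to the unique color `i` with
`y i v = z v i = 0` assigns different colors to adjacent vertices. -/
theorem pop_gives_proper_coloring
    {V : Type*} (G : SimpleGraph V) (H : ℕ) (hH : 1 ≤ H)
    (y : ℕ → V → ℕ) (z : V → ℕ → ℕ)
    (hybin : ∀ i ∈ Icc 1 H, ∀ v : V, y i v = 0 ∨ y i v = 1)
    (hzbin : ∀ v : V, ∀ i ∈ Icc 1 H, z v i = 0 ∨ z v i = 1)
    (hz1 : ∀ v : V, z v 1 = 0)
    (hyH : ∀ v : V, y H v = 0)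
    (hmono : ∀ v : V, ∀ i, 1 ≤ i → i < H → y (i + 1) v ≤ y i v)
    (hcomp : ∀ v : V, ∀ i, 1 ≤ i → i < H → y i v + z v (i + 1) = 1)
    (hedge : ∀ u v : V, G.Adj u v → ∀ i ∈ Icc 1 H,
      1 ≤ y i u + z u i + y i v + z v i)
    (c : V → ℕ)
    (hc : ∀ v : V, c v ∈ Icc 1 H ∧ y (c v) v = 0 ∧ z v (c v) = 0) :
    ∀ u v : V, G.Adj u v → c u ≠ c v :=
  pop_gives_proper_coloring_general G H y z hedge c hc
end

section
/- In the POP formulation with chosen vertex q, suppose in addition to the constraints guaranteeing a proper coloring c, the constraints y(i,q) ≥ y(i,v) hold for all vertices v and colors i < H. Then c(v) ≤ c(q) for all vertices v, and the number of colors used by c is at most 1 + ∑_{i=1}^H y(i,q). -/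
open Finset

/-!
Along each vertex `v` the variables `y (·) v` form a staircase: `y (c v - 1) v + z v (c v) = 1`
with `z v (c v) = 0` gives `y (c v - 1) v = 1`, and monotonicity propagates this to every
`y i v` with `i < c v`. If some `c v` exceeded `c q`, then `1 ≤ y (c q) v ≤ y (c q) q = 0`.
So all colours lie in `[1, c q]`, and the staircase of `q` shows `c q - 1 ≤ ∑ i, y i q`.
-/

theorem antitoneOn_Icc_of_succ_le {α : Type*} [Preorder α] {f : ℕ → α} {a b : ℕ}
    (hf : ∀ n, a ≤ n → n < b → f (n + 1) ≤ f n) : AntitoneOn f (Set.Icc a b) := by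
  rintro m ⟨ham, -⟩ n ⟨-, hnb⟩ hmn
  induction n, hmn using Nat.le_induction with
  | base => exact le_rfl
  | succ n hmn ih => exact (hf n (ham.trans hmn) hnb).trans (ih (by omega))

theorem one_le_of_lt_of_complement_eq_zero {f g : ℕ → ℕ} {H k i : ℕ}
    (hmono : ∀ i, 1 ≤ i → i < H → f (i + 1) ≤ f i)
    (hcomp : ∀ i, 1 ≤ i → i < H → f i + g (i + 1) = 1)
    (hkH : k ≤ H) (hgk : g k = 0) (hi : 1 ≤ i) (hik : i < k) : 1 ≤ f i := by
  have hpred : f (k - 1) = 1 := by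
    have := hcomp (k - 1) (by omega) (by omega)
    rwa [Nat.sub_add_cancel (by omega), hgk, add_zero] at this
  calc 1 = f (k - 1) := hpred.symm
    _ ≤ f i := antitoneOn_Icc_of_succ_le hmono ⟨hi, by omega⟩ ⟨by omega, by omega⟩ (by omega)

theorem pred_le_sum_Icc_of_one_le {f : ℕ → ℕ} {H k : ℕ} (hkH : k ≤ H)
    (hf : ∀ i, 1 ≤ i → i < k → 1 ≤ f i) : k - 1 ≤ ∑ i ∈ Icc 1 H, f i :=
  calc k - 1 = #(Icc 1 (k - 1)) • 1 := by simp
    _ ≤ ∑ i ∈ Icc 1 (k - 1), f i :=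
      card_nsmul_le_sum _ _ _ fun i hi ↦ hf i (mem_Icc.1 hi).1 (by grind)
    _ ≤ ∑ i ∈ Icc 1 H, f i := sum_le_sum_of_subset (Icc_subset_Icc_right (by omega))

theorem card_image_le_of_forall_mem_Icc {V : Type*} [DecidableEq V] {s : Finset V}
    {c : V → ℕ} {m : ℕ} (hc : ∀ v ∈ s, c v ∈ Icc 1 m) : #(s.image c) ≤ m :=
  calc #(s.image c) ≤ #(Icc 1 m) := card_le_card (by simpa [subset_iff] using hc)
    _ = m := by simp

theorem pop_objective_bounds_number_of_colors_general
    {V : Type*} [Fintype V] [DecidableEq V]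
    (H : ℕ) (q : V)
    (y : ℕ → V → ℕ) (z : V → ℕ → ℕ)
    (hmono : ∀ v : V, ∀ i, 1 ≤ i → i < H → y (i + 1) v ≤ y i v)
    (hcomp : ∀ v : V, ∀ i, 1 ≤ i → i < H → y i v + z v (i + 1) = 1)
    (hq : ∀ v : V, ∀ i, 1 ≤ i → i < H → y i v ≤ y i q)
    (c : V → ℕ)
    (hc : ∀ v : V, c v ∈ Icc 1 H ∧ y (c v) v = 0 ∧ z v (c v) = 0) :
    (∀ v : V, c v ≤ c q) ∧
    (Finset.image c Finset.univ).card ≤ 1 + ∑ i ∈ Icc 1 H, y i q := by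
  have hstair : ∀ v i, 1 ≤ i → i < c v → 1 ≤ y i v := fun v _ hi hiv ↦
    one_le_of_lt_of_complement_eq_zero (hmono v) (hcomp v) (mem_Icc.1 (hc v).1).2 (hc v).2.2 hi hiv
  have hle : ∀ v, c v ≤ c q := by
    intro v
    by_contra! hlt
    obtain ⟨hcq, hyq, -⟩ := hc q
    have hq1 := (mem_Icc.1 hcq).1
    have hqH : c q < H := hlt.trans_le (mem_Icc.1 (hc v).1).2
    have := (hstair v (c q) hq1 hlt).trans (hq v (c q) hq1 hqH)
    omega
  refine ⟨hle, ?_⟩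
  have hsum := pred_le_sum_Icc_of_one_le (mem_Icc.1 (hc q).1).2 (hstair q)
  have hcard : #(univ.image c) ≤ c q :=
    card_image_le_of_forall_mem_Icc fun v _ ↦ mem_Icc.2 ⟨(mem_Icc.1 (hc v).1).1, hle v⟩
  omega

/-- In the POP formulation with chosen vertex `q`, the constraints
`y i q ≥ y i v` force `q` to receive the maximal color, and the number of
colors used by the induced coloring is at most `1 + ∑ i, y i q`. -/
theorem pop_objective_bounds_number_of_colors
    {V : Type*} [Fintype V] [DecidableEq V] (G : SimpleGraph V)
    (H : ℕ) (hH : 1 ≤ H) (q : V)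
    (y : ℕ → V → ℕ) (z : V → ℕ → ℕ)
    (hybin : ∀ i ∈ Icc 1 H, ∀ v : V, y i v = 0 ∨ y i v = 1)
    (hzbin : ∀ v : V, ∀ i ∈ Icc 1 H, z v i = 0 ∨ z v i = 1)
    (hz1 : ∀ v : V, z v 1 = 0)
    (hyH : ∀ v : V, y H v = 0)
    (hmono : ∀ v : V, ∀ i, 1 ≤ i → i < H → y (i + 1) v ≤ y i v)
    (hcomp : ∀ v : V, ∀ i, 1 ≤ i → i < H → y i v + z v (i + 1) = 1)
    (hedge : ∀ u v : V, G.Adj u v → ∀ i ∈ Icc 1 H,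
      1 ≤ y i u + z u i + y i v + z v i)
    (hq : ∀ v : V, ∀ i, 1 ≤ i → i < H → y i v ≤ y i q)
    (c : V → ℕ)
    (hc : ∀ v : V, c v ∈ Icc 1 H ∧ y (c v) v = 0 ∧ z v (c v) = 0) :
    (∀ v : V, c v ≤ c q) ∧
    (Finset.image c Finset.univ).card ≤ 1 + ∑ i ∈ Icc 1 H, y i q :=
  pop_objective_bounds_number_of_colors_general H q y z hmono hcomp hq c hc
end

section
/- The optimal value of the POP integer program equals the chromatic number of G: any feasible solution yields a proper coloring using at most 1 + ∑_i y(i,q) colors, and conversely any proper coloring with k ≤ H colors in which vertex q receives the maximal color k yields a feasible POP solution with objective value k. -/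
/-!
A feasible `(y, z)` colours each vertex `v` by `1 + ∑ᵢ y(i,v)`. The column `y(·,v)` is an
antitone `0/1` sequence, so it equals `1` exactly up to that sum, and at the next index both
`y(·,v)` and `z(v,·)` vanish (the latter by `y(i,v) + z(v,i+1) = 1`); the edge constraint at
that index therefore separates adjacent vertices, and the constraints `y(i,q) ≥ y(i,v)` make
`q` carry the largest colour. Conversely a colouring `c` by `1, …, k` with `c q = k` (permute
the colours) gives the feasible solution `y(i,v) = [i < c v]`, `z(v,i) = [c v < i]` of value `k`.
-/

open Finset

/-- Feasibility of the POP integer program for graph `G`, colors `1,…,H` and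
chosen vertex `q`. -/
def POPFeasible {V : Type*} (G : SimpleGraph V) (H : ℕ) (q : V)
    (y : ℕ → V → ℕ) (z : V → ℕ → ℕ) : Prop :=
  (∀ i ∈ Icc 1 H, ∀ v : V, y i v = 0 ∨ y i v = 1) ∧
  (∀ v : V, ∀ i ∈ Icc 1 H, z v i = 0 ∨ z v i = 1) ∧
  (∀ v : V, z v 1 = 0) ∧
  (∀ v : V, y H v = 0) ∧
  (∀ v : V, ∀ i, 1 ≤ i → i < H → y (i + 1) v ≤ y i v) ∧
  (∀ v : V, ∀ i, 1 ≤ i → i < H → y i v + z v (i + 1) = 1) ∧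
  (∀ u v : V, G.Adj u v → ∀ i ∈ Icc 1 H,
      1 ≤ y i u + z u i + y i v + z v i) ∧
  (∀ v : V, ∀ i, 1 ≤ i → i < H → y i v ≤ y i q)

section BinaryAntitone

variable {H : ℕ} {a : ℕ → ℕ}

lemma sum_Icc_eq_card_filter_eq_one (hbin : ∀ i ∈ Icc 1 H, a i = 0 ∨ a i = 1) :
    ∑ i ∈ Icc 1 H, a i = #{i ∈ Icc 1 H | a i = 1} := by
  rw [card_filter]
  refine sum_congr rfl fun i hi => ?_
  rcases hbin i hi with h | h <;> simp [h]

lemma eq_one_iff_le_sum_Icc (hbin : ∀ i ∈ Icc 1 H, a i = 0 ∨ a i = 1)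
    (hanti : AntitoneOn a (Set.Icc 1 H)) {i : ℕ} (hi : i ∈ Icc 1 H) :
    a i = 1 ↔ i ≤ ∑ j ∈ Icc 1 H, a j := by
  rw [sum_Icc_eq_card_filter_eq_one hbin]
  have hai_bin := hbin i hi
  rw [mem_Icc] at hi
  constructor
  · intro hai
    calc i = #(Icc 1 i) := by simp
      _ ≤ _ := card_le_card fun j hj => ?_
    rw [mem_Icc] at hj
    have hjH : j ∈ Icc 1 H := mem_Icc.2 ⟨hj.1, hj.2.trans hi.2⟩
    have := hanti (mem_Icc.1 hjH) hi hj.2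
    have := hbin j hjH
    exact mem_filter.2 ⟨hjH, by omega⟩
  · intro hle
    by_contra hne
    have : #{j ∈ Icc 1 H | a j = 1} ≤ #(Icc 1 (i - 1)) := card_le_card fun j hj => ?_
    · simp only [Nat.card_Icc] at this
      omega
    rw [mem_filter] at hj
    have := hanti hi (mem_Icc.1 hj.1)
    rw [mem_Icc] at hj ⊢
    refine ⟨hj.1.1, ?_⟩
    by_contra hji
    have := this (by omega)
    omega

end BinaryAntitone

/-- Colours are counted from `0` here: `popColor H y v + 1` is the colour of `v` in the paper. -/
def popColor {V : Type*} (H : ℕ) (y : ℕ → V → ℕ) (v : V) : ℕ :=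
  ∑ i ∈ Icc 1 H, y i v

namespace POPFeasible

variable {V : Type*} {G : SimpleGraph V} {H : ℕ} {q : V} {y : ℕ → V → ℕ} {z : V → ℕ → ℕ}

lemma antitoneOn (h : POPFeasible G H q y z) (v : V) :
    AntitoneOn (fun i => y i v) (Set.Icc 1 H) :=
  antitoneOn_of_add_one_le Set.ordConnected_Icc fun i _ hi hi' =>
    h.2.2.2.2.1 v i hi.1 (by simpa using hi'.2)

lemma y_eq_one_iff (h : POPFeasible G H q y z) {i : ℕ} (hi : i ∈ Icc 1 H) (v : V) :
    y i v = 1 ↔ i ≤ popColor H y v :=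
  eq_one_iff_le_sum_Icc (fun i hi => h.1 i hi v) (h.antitoneOn v) hi

lemma popColor_lt (h : POPFeasible G H q y z) (hH : 1 ≤ H) (v : V) : popColor H y v < H := by
  by_contra hle
  have := (h.y_eq_one_iff (mem_Icc.2 ⟨hH, le_rfl⟩) v).2 (by omega)
  rw [h.2.2.2.1 v] at this
  omega

lemma y_popColor_add_one (h : POPFeasible G H q y z) (hH : 1 ≤ H) (v : V) :
    y (popColor H y v + 1) v = 0 := by
  have hmem : popColor H y v + 1 ∈ Icc 1 H := mem_Icc.2 ⟨by omega, h.popColor_lt hH v⟩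
  have := h.y_eq_one_iff hmem v
  have := h.1 _ hmem v
  omega

lemma z_popColor_add_one (h : POPFeasible G H q y z) (hH : 1 ≤ H) (v : V) :
    z v (popColor H y v + 1) = 0 := by
  obtain h0 | hpos := Nat.eq_zero_or_pos (popColor H y v)
  · rw [h0]
    exact h.2.2.1 v
  · have hy : y (popColor H y v) v = 1 :=
      (h.y_eq_one_iff (mem_Icc.2 ⟨hpos, (h.popColor_lt hH v).le⟩) v).2 le_rfl
    have := h.2.2.2.2.2.1 v _ hpos (h.popColor_lt hH v)
    omega

lemma popColor_ne_of_adj (h : POPFeasible G H q y z) (hH : 1 ≤ H) {u v : V} (huv : G.Adj u v) :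
    popColor H y u ≠ popColor H y v := by
  intro heq
  have := h.2.2.2.2.2.2.1 u v huv (popColor H y u + 1)
    (mem_Icc.2 ⟨by omega, h.popColor_lt hH u⟩)
  rw [h.y_popColor_add_one hH u, h.z_popColor_add_one hH u, heq, h.y_popColor_add_one hH v,
    h.z_popColor_add_one hH v] at this
  omega

lemma popColor_le_popColor (h : POPFeasible G H q y z) (v : V) :
    popColor H y v ≤ popColor H y q := by
  refine sum_le_sum fun i hi => ?_
  obtain ⟨hi1, hiH⟩ := mem_Icc.1 hi
  obtain rfl | hlt := hiH.eq_or_lt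
  · simp [h.2.2.2.1 v]
  · exact h.2.2.2.2.2.2.2 v i hi1 hlt

lemma colorable (h : POPFeasible G H q y z) (hH : 1 ≤ H) :
    G.Colorable (1 + popColor H y q) :=
  ⟨SimpleGraph.Coloring.mk (fun v => ⟨popColor H y v, by have := h.popColor_le_popColor v; omega⟩)
    fun huv heq => h.popColor_ne_of_adj hH huv (Fin.val_eq_of_eq heq)⟩

end POPFeasible

lemma SimpleGraph.Colorable.exists_nat_coloring_max_at {V : Type*} {G : SimpleGraph V} {k : ℕ}
    (hc : G.Colorable k) (q : V) :
    ∃ f : V → ℕ, (∀ v, 1 ≤ f v ∧ f v ≤ k) ∧ f q = k ∧ ∀ u v, G.Adj u v → f u ≠ f v := by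
  obtain ⟨C⟩ := hc
  have hk : 0 < k := Fin.pos (C q)
  let e := Equiv.swap (C q) ⟨k - 1, by omega⟩
  refine ⟨fun v => e (C v) + 1, fun v => ⟨Nat.le_add_left 1 _, (e (C v)).isLt⟩, ?_,
    fun u v huv heq => C.valid huv (e.injective (Fin.ext (Nat.succ_injective heq)))⟩
  simp only [e, Equiv.swap_apply_left]
  omega

section ColoringSolution

variable {V : Type*} (f : V → ℕ)

def popY (i : ℕ) (v : V) : ℕ := if i < f v then 1 else 0

def popZ (v : V) (i : ℕ) : ℕ := if f v < i then 1 else 0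

lemma popFeasible_popY_popZ {G : SimpleGraph V} {H : ℕ} {q : V} (hpos : ∀ v, 1 ≤ f v)
    (hle : ∀ v, f v ≤ f q) (hqH : f q ≤ H) (hadj : ∀ u v, G.Adj u v → f u ≠ f v) :
    POPFeasible G H q (popY f) (popZ f) := by
  unfold POPFeasible popY popZ
  refine ⟨fun i _ v => ?_, fun v i _ => ?_, fun v => ?_, fun v => ?_, fun v i _ _ => ?_,
    fun v i _ _ => ?_, fun u v huv i _ => by have := hadj u v huv; split_ifs <;> omega,
    fun v i _ _ => ?_⟩
  all_goals
    have := hpos v; have := hle v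
    split_ifs <;> omega

lemma one_add_sum_popY {H : ℕ} {v : V} (h1 : 1 ≤ f v) (hH : f v ≤ H) :
    1 + ∑ i ∈ Icc 1 H, popY f i v = f v := by
  simp only [popY, sum_boole, Nat.cast_id]
  rw [show {i ∈ Icc 1 H | i < f v} = Ico 1 (f v) by ext i; simp; omega, Nat.card_Ico]
  omega

end ColoringSolution

theorem pop_optimal_value_eq_chromaticNumber_general
    {V : Type*} (G : SimpleGraph V)
    (H k : ℕ) (q : V)
    (hk : G.chromaticNumber = (k : ℕ∞)) (hkH : k ≤ H) :
    IsLeast {n : ℕ | ∃ (y : ℕ → V → ℕ) (z : V → ℕ → ℕ),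
        POPFeasible G H q y z ∧ n = 1 + ∑ i ∈ Icc 1 H, y i q} k := by
  have hcol : G.Colorable k := SimpleGraph.chromaticNumber_le_iff_colorable.1 hk.le
  obtain ⟨f, hf, hfq, hadj⟩ := hcol.exists_nat_coloring_max_at q
  refine ⟨⟨popY f, popZ f, ?_, ?_⟩, ?_⟩
  · exact popFeasible_popY_popZ f (fun v => (hf v).1) (fun v => hfq ▸ (hf v).2) (hfq ▸ hkH) hadj
  · rw [one_add_sum_popY f (hf q).1 (hfq ▸ hkH), hfq]
  · rintro n ⟨y, z, hyz, rfl⟩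
    have hH : 1 ≤ H := ((hf q).1.trans (hf q).2).trans hkH
    have := (hyz.colorable hH).chromaticNumber_le
    rw [hk] at this
    exact_mod_cast this

/-- The optimal value of the POP integer program equals the chromatic number. -/
theorem pop_optimal_value_eq_chromaticNumber
    {V : Type*} [Fintype V] (G : SimpleGraph V)
    (H k : ℕ) (q : V)
    (hk : G.chromaticNumber = (k : ℕ∞)) (hkH : k ≤ H) :
    IsLeast {n : ℕ | ∃ (y : ℕ → V → ℕ) (z : V → ℕ → ℕ),
        POPFeasible G H q y z ∧ n = 1 + ∑ i ∈ Icc 1 H, y i q} k :=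
  pop_optimal_value_eq_chromaticNumber_general G H k q hk hkH
end

section
/- Given a feasible solution (y,z) of the POP constraints, define x(v,i) = 1 − (y(i,v) + z(v,i)). Then x(v,i) ∈ {0,1} for all v,i, ∑_{i=1}^H x(v,i) = 1 for every vertex v, and x(u,i)+x(v,i) ≤ 1 for every edge (u,v) and color i; i.e., x is a feasible solution of the assignment constraints. -/
/-!
Read `y i v = 1` as "the colour of `v` exceeds `i`", so that `y 0 v = 1` is implicit. The
constraints `z v 1 = 0` and `y i v + z v (i + 1) = 1` then turn `x v i` into the difference
`y (i - 1) v - y i v` of this extended staircase: it is `0` or `1` because the staircase is binary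
and nonincreasing, and its sum over `1 ≤ i ≤ H` telescopes to `y 0 v - y H v = 1`.
-/

open Finset

theorem Finset.sum_Icc_one_sub_pred {M : Type*} [AddCommGroup M] (f : ℕ → M) (n : ℕ) :
    ∑ i ∈ Icc 1 n, (f (i - 1) - f i) = f 0 - f n := by
  rw [← Ico_add_one_right_eq_Icc, sum_Ico_eq_sum_range]
  simpa [add_comm 1] using sum_range_sub' f n

section Staircase

variable {a c : ℕ → ℤ} {H i : ℕ}

theorem one_sub_add_eq_update_pred_sub (hc1 : c 1 = 0)
    (hcomp : ∀ i, 1 ≤ i → i < H → a i + c (i + 1) = 1) (hi : i ∈ Icc 1 H) :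
    1 - (a i + c i) = Function.update a 0 1 (i - 1) - Function.update a 0 1 i := by
  obtain ⟨hi1, hiH⟩ := mem_Icc.mp hi
  match i, hi1 with
  | 1, _ => simp [hc1]
  | j + 1 + 1, _ =>
    have := hcomp (j + 1) (by omega) (by omega)
    rw [Nat.add_sub_cancel, Function.update_of_ne (by omega), Function.update_of_ne (by omega)]
    omega

theorem update_pred_sub_eq_zero_or_eq_one (hbin : ∀ i ∈ Icc 1 H, a i = 0 ∨ a i = 1)
    (hmono : ∀ i, 1 ≤ i → i < H → a (i + 1) ≤ a i) (hi : i ∈ Icc 1 H) :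
    Function.update a 0 1 (i - 1) - Function.update a 0 1 i = 0 ∨
      Function.update a 0 1 (i - 1) - Function.update a 0 1 i = 1 := by
  obtain ⟨hi1, hiH⟩ := mem_Icc.mp hi
  have hai := hbin i hi
  match i, hi1 with
  | 1, _ =>
    rw [Nat.sub_self, Function.update_self, Function.update_of_ne one_ne_zero]
    omega
  | j + 1 + 1, _ =>
    have := hbin (j + 1) (mem_Icc.mpr ⟨by omega, by omega⟩)
    have := hmono (j + 1) (by omega) (by omega)
    rw [Nat.add_sub_cancel, Function.update_of_ne (by omega), Function.update_of_ne (by omega)]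
    omega

end Staircase

theorem pop_to_assignment_general
    {V : Type*} (G : SimpleGraph V) (H : ℕ) (hH : 1 ≤ H)
    (y : ℕ → V → ℤ) (z : V → ℕ → ℤ)
    (hybin : ∀ i ∈ Icc 1 H, ∀ v : V, y i v = 0 ∨ y i v = 1)
    (hz1 : ∀ v : V, z v 1 = 0)
    (hyH : ∀ v : V, y H v = 0)
    (hmono : ∀ v : V, ∀ i, 1 ≤ i → i < H → y (i + 1) v ≤ y i v)
    (hcomp : ∀ v : V, ∀ i, 1 ≤ i → i < H → y i v + z v (i + 1) = 1)
    (hedge : ∀ u v : V, G.Adj u v → ∀ i ∈ Icc 1 H,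
      1 ≤ y i u + z u i + y i v + z v i)
    (x : V → ℕ → ℤ)
    (hx : ∀ v i, x v i = 1 - (y i v + z v i)) :
    (∀ v : V, ∀ i ∈ Icc 1 H, x v i = 0 ∨ x v i = 1) ∧
    (∀ v : V, ∑ i ∈ Icc 1 H, x v i = 1) ∧
    (∀ u v : V, G.Adj u v → ∀ i ∈ Icc 1 H, x u i + x v i ≤ 1) := by
  set b : V → ℕ → ℤ := fun v => Function.update (fun i => y i v) 0 1
  have hxb : ∀ v, ∀ i ∈ Icc 1 H, x v i = b v (i - 1) - b v i := fun v i hi =>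
    (hx v i).trans (one_sub_add_eq_update_pred_sub (hz1 v) (hcomp v) hi)
  refine ⟨fun v i hi => ?_, fun v => ?_, fun u v huv i hi => ?_⟩
  · rw [hxb v i hi]
    exact update_pred_sub_eq_zero_or_eq_one (fun i hi => hybin i hi v) (hmono v) hi
  · rw [sum_congr rfl (hxb v), sum_Icc_one_sub_pred]
    simp [b, Function.update_of_ne (show H ≠ 0 by omega), hyH]
  · rw [hx, hx]
    linarith [hedge u v huv i hi]

/-- Given a feasible solution `(y, z)` of the POP constraints, the assignment
variables `x v i = 1 - (y i v + z v i)` form a feasible solution of the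
assignment constraints. -/
theorem pop_to_assignment
    {V : Type*} (G : SimpleGraph V) (H : ℕ) (hH : 1 ≤ H)
    (y : ℕ → V → ℤ) (z : V → ℕ → ℤ)
    (hybin : ∀ i ∈ Icc 1 H, ∀ v : V, y i v = 0 ∨ y i v = 1)
    (hzbin : ∀ v : V, ∀ i ∈ Icc 1 H, z v i = 0 ∨ z v i = 1)
    (hz1 : ∀ v : V, z v 1 = 0)
    (hyH : ∀ v : V, y H v = 0)
    (hmono : ∀ v : V, ∀ i, 1 ≤ i → i < H → y (i + 1) v ≤ y i v)
    (hcomp : ∀ v : V, ∀ i, 1 ≤ i → i < H → y i v + z v (i + 1) = 1)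
    (hedge : ∀ u v : V, G.Adj u v → ∀ i ∈ Icc 1 H,
      1 ≤ y i u + z u i + y i v + z v i)
    (x : V → ℕ → ℤ)
    (hx : ∀ v i, x v i = 1 - (y i v + z v i)) :
    (∀ v : V, ∀ i ∈ Icc 1 H, x v i = 0 ∨ x v i = 1) ∧
    (∀ v : V, ∑ i ∈ Icc 1 H, x v i = 1) ∧
    (∀ u v : V, G.Adj u v → ∀ i ∈ Icc 1 H, x u i + x v i ≤ 1) :=
  pop_to_assignment_general G H hH y z hybin hz1 hyH hmono hcomp hedge x hx
end

section
/- Let c be a proper coloring of G with colors in {1,…,H} and suppose vertex q satisfies c(q) ≥ c(v) for all v. Define y(i,v) = 1 if c(v) > i else 0, and z(v,i) = 1 if c(v) < i else 0. Then (y,z) satisfies all POP constraints: z(v,1)=0, y(H,v)=0, y(i,v) ≥ y(i+1,v), y(i,v)+z(v,i+1)=1, y(i,u)+z(u,i)+y(i,v)+z(v,i) ≥ 1 for edges (u,v), and y(i,q) ≥ y(i,v); moreover 1 + ∑_{i=1}^H y(i,q) = c(q). -/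
open Finset

/-!
`y i v` and `z v i` are the indicators of `i < c v` and `c v < i`, so `y i v + z v i = 1` unless
`c v = i`; properness forbids `c u = c v = i` at an edge `uv`, which gives the edge constraint.
The objective counts the levels `i ∈ [1, H]` below `c q`, of which there are `c q - 1`.
-/

lemma ite_lt_add_ite_lt_succ (i a : ℕ) :
    ((if i < a then 1 else 0) + if a < i + 1 then 1 else 0) = 1 := by
  split_ifs <;> omega

lemma one_le_ite_lt_add_ite_gt_add_ite_lt_add_ite_gt {a b : ℕ} (hab : a ≠ b) (i : ℕ) :
    1 ≤ (if i < a then 1 else 0) + (if a < i then 1 else 0) +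
      (if i < b then 1 else 0) + (if b < i then 1 else 0) := by
  split_ifs <;> omega

lemma ite_lt_le_ite_lt {i j a b : ℕ} (hji : j ≤ i) (hab : a ≤ b) :
    (if i < a then 1 else 0) ≤ if j < b then 1 else 0 := by
  split_ifs <;> omega

lemma sum_Icc_ite_lt {a H : ℕ} (ha : a ≤ H + 1) :
    ∑ i ∈ Icc 1 H, (if i < a then 1 else 0) = a - 1 := by
  rw [sum_boole, Nat.cast_id, ← Nat.card_Ico 1 a]
  congr 1
  ext i
  simp only [mem_filter, mem_Icc, mem_Ico]
  omega

theorem coloring_gives_pop_solution_general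
    {V : Type*} (G : SimpleGraph V)
    (H : ℕ) (q : V)
    (c : V → ℕ)
    (hrange : ∀ v : V, c v ∈ Icc 1 H)
    (hproper : ∀ u v : V, G.Adj u v → c u ≠ c v)
    (hmax : ∀ v : V, c v ≤ c q)
    (y : ℕ → V → ℕ) (z : V → ℕ → ℕ)
    (hy : ∀ i (v : V), y i v = if i < c v then 1 else 0)
    (hz : ∀ (v : V) i, z v i = if c v < i then 1 else 0) :
    (∀ i ∈ Icc 1 H, ∀ v : V, y i v = 0 ∨ y i v = 1) ∧
    (∀ v : V, ∀ i ∈ Icc 1 H, z v i = 0 ∨ z v i = 1) ∧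
    (∀ v : V, z v 1 = 0) ∧
    (∀ v : V, y H v = 0) ∧
    (∀ v : V, ∀ i, 1 ≤ i → i < H → y (i + 1) v ≤ y i v) ∧
    (∀ v : V, ∀ i, 1 ≤ i → i < H → y i v + z v (i + 1) = 1) ∧
    (∀ u v : V, G.Adj u v → ∀ i ∈ Icc 1 H,
        1 ≤ y i u + z u i + y i v + z v i) ∧
    (∀ v : V, ∀ i, 1 ≤ i → i < H → y i v ≤ y i q) ∧
    1 + ∑ i ∈ Icc 1 H, y i q = c q := by
  obtain rfl : y = fun i v => if i < c v then 1 else 0 := funext₂ hy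
  obtain rfl : z = fun v i => if c v < i then 1 else 0 := funext₂ hz
  have hc (v : V) : 1 ≤ c v ∧ c v ≤ H := mem_Icc.mp (hrange v)
  refine ⟨fun i _ v => (ite_eq_or_eq _ _ _).symm, fun v i _ => (ite_eq_or_eq _ _ _).symm,
    fun v => if_neg (not_lt.mpr (hc v).1), fun v => if_neg (not_lt.mpr (hc v).2),
    fun v i _ _ => ite_lt_le_ite_lt (Nat.le_succ i) le_rfl,
    fun v i _ _ => ite_lt_add_ite_lt_succ i (c v),
    fun u v huv i _ => one_le_ite_lt_add_ite_gt_add_ite_lt_add_ite_gt (hproper u v huv) i,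
    fun v i _ _ => ite_lt_le_ite_lt le_rfl (hmax v), ?_⟩
  rw [sum_Icc_ite_lt (Nat.le_succ_of_le (hc q).2)]
  have := (hc q).1
  omega

/-- A proper coloring `c` with colors in `{1,…,H}` in which `q` receives the
maximal color induces a feasible solution of the POP constraints of objective
value `c q`. -/
theorem coloring_gives_pop_solution
    {V : Type*} (G : SimpleGraph V)
    (H : ℕ) (hH : 1 ≤ H) (q : V)
    (c : V → ℕ)
    (hrange : ∀ v : V, c v ∈ Icc 1 H)
    (hproper : ∀ u v : V, G.Adj u v → c u ≠ c v)
    (hmax : ∀ v : V, c v ≤ c q)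
    (y : ℕ → V → ℕ) (z : V → ℕ → ℕ)
    (hy : ∀ i (v : V), y i v = if i < c v then 1 else 0)
    (hz : ∀ (v : V) i, z v i = if c v < i then 1 else 0) :
    (∀ i ∈ Icc 1 H, ∀ v : V, y i v = 0 ∨ y i v = 1) ∧
    (∀ v : V, ∀ i ∈ Icc 1 H, z v i = 0 ∨ z v i = 1) ∧
    (∀ v : V, z v 1 = 0) ∧
    (∀ v : V, y H v = 0) ∧
    (∀ v : V, ∀ i, 1 ≤ i → i < H → y (i + 1) v ≤ y i v) ∧
    (∀ v : V, ∀ i, 1 ≤ i → i < H → y i v + z v (i + 1) = 1) ∧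
    (∀ u v : V, G.Adj u v → ∀ i ∈ Icc 1 H,
        1 ≤ y i u + z u i + y i v + z v i) ∧
    (∀ v : V, ∀ i, 1 ≤ i → i < H → y i v ≤ y i q) ∧
    1 + ∑ i ∈ Icc 1 H, y i q = c q :=
  coloring_gives_pop_solution_general G H q c hrange hproper hmax y z hy hz
end
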